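/- arXiv:0808.2592 — 3 statements merged into one kernel-verified Lean document; each statement's English description precedes it below -/
import Mathlib

section
/- Let p be a prime and let α = (α_1, ..., α_r) be a partition of d (i.e. positive integers with α_1 + ... + α_r = d). Then v_p(τ_{d-1}) + 1 ≥ v_p(∏_{i=1}^r (α_i + 1)!), where v_p denotes the p-adic valuation and τ_{d-1} = ∏_{q prime} q^{⌊(d-1)/(q-1)⌋} is the (d-1)-st Todd number. -/
/-- The `n`-th Todd number `τ_n = ∏_{p prime} p^{⌊n/(p-1)⌋}`. -/
def toddNumber (n : ℕ) : ℕ :=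
  ∏ p ∈ (Finset.range (n + 2)).filter Nat.Prime, p ^ (n / (p - 1))

lemma sum_digits_pos (p m : ℕ) (hm : m ≠ 0) : 0 < (p.digits m).sum := by
  have hne : p.digits m ≠ [] := Nat.digits_ne_nil_iff_ne_zero.mpr hm
  have hlast := Nat.getLast_digit_ne_zero p hm
  have hmem : (p.digits m).getLast hne ∈ p.digits m := List.getLast_mem hne
  have := List.single_le_sum (fun x _ => Nat.zero_le x) _ hmem
  omega

lemma factorial_val_le (p : ℕ) [hp : Fact p.Prime] (m : ℕ) (hm : 0 < m) :
    (p - 1) * padicValNat p (Nat.factorial m) ≤ m - 1 := by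
  rw [sub_one_mul_padicValNat_factorial]
  have := sum_digits_pos p m hm.ne'; omega

lemma list_val_le (p : ℕ) [hp : Fact p.Prime] (α : List ℕ) (hpos : ∀ a ∈ α, 0 < a) :
    (p - 1) * padicValNat p ((α.map fun a => Nat.factorial (a + 1)).prod) ≤ α.sum := by
  induction α with
  | nil => simp
  | cons a l ih =>
    have h1 : Nat.factorial (a + 1) ≠ 0 := Nat.factorial_ne_zero _
    have h2 : ((l.map fun a => Nat.factorial (a + 1)).prod) ≠ 0 := by
      simp [List.prod_eq_zero_iff, Nat.factorial_ne_zero]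
    rw [List.map_cons, List.prod_cons, padicValNat.mul h1 h2, List.sum_cons, Nat.mul_add]
    have ha := factorial_val_le p (a + 1) (Nat.succ_pos a)
    have hb := ih (fun x hx => hpos x (List.mem_cons_of_mem a hx))
    omega

/-- For a prime `p` and a partition `α = (α_1, …, α_r)` of `d`,
`v_p(τ_{d-1}) + 1 ≥ v_p(∏_i (α_i + 1)!)`. -/
theorem padicValNat_partition_factorial_le (p d : ℕ) (hp : p.Prime) (hd : 0 < d)
    (α : List ℕ) (hpos : ∀ a ∈ α, 0 < a) (hsum : α.sum = d) :
    padicValNat p ((α.map fun a => Nat.factorial (a + 1)).prod) ≤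
      padicValNat p (toddNumber (d - 1)) + 1 := by
  haveI : Fact p.Prime := ⟨hp⟩
  have hp1 : 1 < p := hp.one_lt
  have key : (p - 1) * padicValNat p ((α.map fun a => Nat.factorial (a + 1)).prod) ≤ d := by
    rw [← hsum]; exact list_val_le p α hpos
  -- so the valuation is ≤ d / (p-1)
  have hdiv : padicValNat p ((α.map fun a => Nat.factorial (a + 1)).prod) ≤ d / (p - 1) := by
    rw [Nat.le_div_iff_mul_le (by omega : 0 < p - 1), Nat.mul_comm]
    exact key
  by_cases hpd : p ≤ d
  · -- p ^ ((d-1)/(p-1)) divides toddNumber (d-1)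
    have hmem : p ∈ (Finset.range (d - 1 + 2)).filter Nat.Prime := by
      simp only [Finset.mem_filter, Finset.mem_range]
      exact ⟨by omega, hp⟩
    have hdvd : p ^ ((d - 1) / (p - 1)) ∣ toddNumber (d - 1) :=
      Finset.dvd_prod_of_mem _ hmem
    have htne : toddNumber (d - 1) ≠ 0 := by
      refine Finset.prod_ne_zero_iff.mpr fun q hq => ?_
      have hq2 : q.Prime := (Finset.mem_filter.mp hq).2
      exact pow_ne_zero _ hq2.pos.ne'
    have hle : (d - 1) / (p - 1) ≤ padicValNat p (toddNumber (d - 1)) := by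
      rw [← Nat.factorization_def _ hp]
      exact (Nat.Prime.pow_dvd_iff_le_factorization hp htne).mp hdvd
    have hstep : d / (p - 1) ≤ (d - 1) / (p - 1) + 1 := by
      have : d / (p - 1) = (d - 1 + 1) / (p - 1) := by congr 1; omega
      rw [this]
      calc (d - 1 + 1) / (p - 1) ≤ (d - 1 + (p - 1)) / (p - 1) :=
            Nat.div_le_div_right (by omega)
        _ = (d - 1) / (p - 1) + 1 := Nat.add_div_right _ (by omega)
    omega
  · have : d / (p - 1) ≤ 1 := by
      have : d ≤ p - 1 := by omega
      calc d / (p - 1) ≤ (p - 1) / (p - 1) := Nat.div_le_div_right this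
        _ = 1 := Nat.div_self (by omega)
    omega
end

section
/- Let p be a prime and α = (α_1, ..., α_r) a partition of d. Then v_p(τ_{d-1}) + 1 = v_p(∏_{i=1}^r (α_i + 1)!) if and only if every part α_i is of the form p^{k_i} - 1 for some positive integer k_i. -/
namespace Nat

theorem digit_sum_pos (b : ℕ) {n : ℕ} (hn : n ≠ 0) : 0 < (b.digits n).sum :=
  List.sum_pos_iff_exists_pos_nat.mpr ⟨_, List.getLast_mem (digits_ne_nil_iff_ne_zero.mpr hn),
    Nat.pos_of_ne_zero (getLast_digit_ne_zero b hn)⟩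

theorem ofDigits_eq_pow_of_sum_eq_one (b : ℕ) {L : List ℕ} (h : L.sum = 1) :
    ∃ i, ofDigits b L = b ^ i := by
  induction L with
  | nil => simp at h
  | cons a t ih =>
    rw [List.sum_cons] at h
    obtain ⟨rfl, ht⟩ | ⟨rfl, ht⟩ : a = 0 ∧ t.sum = 1 ∨ a = 1 ∧ t.sum = 0 := by omega
    · obtain ⟨i, hi⟩ := ih ht
      exact ⟨i + 1, by rw [ofDigits_cons, hi, pow_succ']; simp⟩
    · have ht0 : t = List.replicate t.length 0 :=
        List.eq_replicate_iff.2 ⟨rfl, List.sum_eq_zero_iff.1 ht⟩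
      exact ⟨0, by rw [ofDigits_cons, ht0, ofDigits_replicate_zero]; simp⟩

theorem digit_sum_eq_one_iff {b n : ℕ} (hb : 1 < b) :
    (b.digits n).sum = 1 ↔ ∃ k, n = b ^ k := by
  constructor
  · intro h
    simpa only [ofDigits_digits, eq_comm] using ofDigits_eq_pow_of_sum_eq_one b h
  · rintro ⟨k, rfl⟩
    rw [← mul_one (b ^ k), digits_base_pow_mul hb one_pos, digits_of_lt b 1 one_ne_zero hb]
    simp

theorem sub_one_div_add_one_eq_iff {m d v : ℕ} (hm : 0 < m) (hd : 0 < d) (hv : m * v ≤ d) :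
    (d - 1) / m + 1 = v ↔ m * v = d := by
  constructor
  · rintro rfl
    have := lt_mul_div_succ (d - 1) hm
    omega
  · rintro rfl
    obtain ⟨w, rfl⟩ : ∃ w, v = w + 1 := exists_eq_succ_of_ne_zero (by rintro rfl; simp at hd)
    have h₁ : m * (w + 1) = w * m + m := by ring
    have h₂ : (w + 1) * m = w * m + m := by ring
    rw [Nat.div_eq_of_lt_le (k := w) (by omega) (by omega)]

end Nat

theorem List.sum_map_eq_length_iff_of_one_le {ι : Type*} {l : List ι} {f : ι → ℕ}
    (h : ∀ i ∈ l, 1 ≤ f i) : (l.map f).sum = l.length ↔ ∀ i ∈ l, f i = 1 := by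
  refine ⟨fun hsum => ?_, fun h1 => by simp [List.map_congr_left h1]⟩
  by_contra! ⟨i, hi, hne⟩
  have := List.sum_lt_sum (fun _ => 1) f h ⟨i, hi, lt_of_le_of_ne (h i hi) (Ne.symm hne)⟩
  simp only [map_const', sum_replicate, smul_eq_mul, mul_one] at this
  omega

theorem sub_one_mul_padicValNat_prod_factorial_add_digit_sum {p : ℕ} [Fact p.Prime] {ι : Type*}
    (l : List ι) (f : ι → ℕ) :
    (p - 1) * padicValNat p (l.map fun i => (f i).factorial).prod +
      (l.map fun i => (p.digits (f i)).sum).sum = (l.map f).sum := by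
  induction l with
  | nil => simp
  | cons i l ih =>
    have hprod : (l.map fun i => (f i).factorial).prod ≠ 0 := by
      simp [List.prod_eq_zero_iff, Nat.factorial_ne_zero]
    simp only [List.map_cons, List.prod_cons, List.sum_cons]
    rw [padicValNat.mul (Nat.factorial_ne_zero _) hprod, mul_add, sub_one_mul_padicValNat_factorial]
    have := Nat.digit_sum_le p (f i)
    omega

theorem padicValNat_toddNumber {p : ℕ} (hp : p.Prime) (n : ℕ) :
    padicValNat p (toddNumber n) = n / (p - 1) := by
  rw [← Nat.factorization_def _ hp, toddNumber,
    Nat.factorization_prod fun q hq => (pow_pos (Finset.mem_filter.1 hq).2.pos _).ne',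
    Finset.sum_apply', Finset.sum_eq_single p, Nat.factorization_pow_self hp]
  · intro q hq hqp
    rw [(Finset.mem_filter.1 hq).2.factorization_pow, Finsupp.single_eq_of_ne' hqp]
  · intro hp'
    simp only [Finset.mem_filter, Finset.mem_range, not_and] at hp'
    rw [Nat.factorization_pow_self hp, Nat.div_eq_of_lt]
    have := mt hp' (not_not.2 hp)
    omega

/-- For a prime `p` and a partition `α` of `d`, the equality
`v_p(τ_{d-1}) + 1 = v_p(∏_i (α_i + 1)!)` holds if and only if every part `α_i`
is of the form `p^{k_i} - 1` for some positive integer `k_i`. -/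
theorem padicValNat_partition_factorial_eq_iff (p d : ℕ) (hp : p.Prime) (hd : 0 < d)
    (α : List ℕ) (hpos : ∀ a ∈ α, 0 < a) (hsum : α.sum = d) :
    padicValNat p (toddNumber (d - 1)) + 1 =
        padicValNat p ((α.map fun a => Nat.factorial (a + 1)).prod) ↔
      ∀ a ∈ α, ∃ k : ℕ, 1 ≤ k ∧ a = p ^ k - 1 := by
  have := Fact.mk hp
  have hdigit_sum_pos : ∀ a ∈ α, 1 ≤ (p.digits (a + 1)).sum :=
    fun a _ => Nat.digit_sum_pos p (Nat.add_one_ne_zero a)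
  have hlegendre := sub_one_mul_padicValNat_prod_factorial_add_digit_sum (p := p) α (· + 1)
  rw [List.sum_map_add, List.map_id', hsum, List.map_const', List.sum_replicate, smul_eq_mul,
    mul_one] at hlegendre
  have hlength := List.length_le_sum_of_one_le _ (List.forall_mem_map.2 hdigit_sum_pos)
  rw [List.length_map] at hlength
  rw [padicValNat_toddNumber hp, Nat.sub_one_div_add_one_eq_iff (by have := hp.two_le; omega) hd
    (by omega)]
  calc _ ↔ (α.map fun a => (p.digits (a + 1)).sum).sum = α.length := by omega
    _ ↔ ∀ a ∈ α, (p.digits (a + 1)).sum = 1 :=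
      List.sum_map_eq_length_iff_of_one_le hdigit_sum_pos
    _ ↔ _ := forall₂_congr fun a ha => by
      rw [Nat.digit_sum_eq_one_iff hp.one_lt]
      refine exists_congr fun k => ?_
      rcases Nat.eq_zero_or_pos k with rfl | hk
      · simpa using (hpos a ha).ne'
      · have := Nat.one_le_pow k p hp.pos
        omega
end

section
/- Let p be a prime, d a positive integer, and α = (α_1, ..., α_r) a partition of d in which every part has the form p^k - 1 for some k ≥ 1. Then the rational number p · τ_{d-1} / ∏_{i=1}^r (α_i + 1)! is an integer not divisible by p. -/
/-! At a prime `q`, Legendre's formula `(q - 1) · v_q(n!) = n - s_q(n)` (with `s_q` the base-`q`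
digit sum) computes the valuation of `∏ (α_i + 1)!` part by part. Each `α_i + 1` is a power of `p`,
so `s_p(α_i + 1) = 1` and `(p - 1) · v_p = Σ α_i = d`; in particular `p - 1 ∣ d`, and this matches
`v_p(p · τ_{d-1}) = 1 + ⌊(d - 1)/(p - 1)⌋ = d/(p - 1)` exactly. For `q ≠ p` the number `α_i + 1` is
not a power of `q`, so `s_q(α_i + 1) ≥ 2`, whence `(q - 1) · v_q ≤ d - 1` and
`v_q ≤ ⌊(d - 1)/(q - 1)⌋ = v_q(τ_{d-1})`. -/

open Nat

theorem Nat.factorization_list_prod {l : List ℕ} (hl : 0 ∉ l) (q : ℕ) :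
    l.prod.factorization q = (l.map (·.factorization q)).sum := by
  induction l with
  | nil => simp
  | cons a l ih =>
    rw [List.mem_cons, not_or] at hl
    rw [List.prod_cons, factorization_mul (Ne.symm hl.1) (List.prod_ne_zero hl.2),
      Finsupp.add_apply, ih hl.2, List.map_cons, List.sum_cons]

theorem Nat.digits_sum_pos {b n : ℕ} (hn : n ≠ 0) : 0 < (b.digits n).sum :=
  List.sum_pos_iff_exists_pos_nat.2 ⟨_, List.getLast_mem (digits_ne_nil_iff_ne_zero.2 hn),
    pos_of_ne_zero (getLast_digit_ne_zero b hn)⟩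

theorem Nat.digits_sum_base_pow {b : ℕ} (hb : 1 < b) (k : ℕ) : (b.digits (b ^ k)).sum = 1 := by
  simpa [digits_of_lt b 1 one_ne_zero hb] using
    congrArg List.sum (digits_base_pow_mul hb (k := k) one_pos)

theorem Nat.two_le_digits_sum_of_not_dvd {b n : ℕ} (hb : 1 < b) (hn : 2 ≤ n) (hbn : ¬b ∣ n) :
    2 ≤ (b.digits n).sum := by
  have hmod : n % b ≠ 0 := fun h => hbn (dvd_of_mod_eq_zero h)
  rw [digits_def' hb (by omega), List.sum_cons]
  rcases eq_or_ne (n / b) 0 with hdiv | hdiv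
  · rw [hdiv, mod_eq_of_lt ((Nat.div_eq_zero_iff_lt (by omega)).1 hdiv)]
    simpa using hn
  · have := digits_sum_pos (b := b) hdiv
    omega

theorem Nat.Prime.sub_one_mul_factorization_factorial_pow {p : ℕ} (hp : p.Prime) (k : ℕ) :
    (p - 1) * (p ^ k)!.factorization p = p ^ k - 1 := by
  rw [sub_one_mul_factorization_factorial hp, digits_sum_base_pow hp.one_lt]

theorem Nat.Prime.sub_one_mul_factorization_factorial_pow_add_two_le {p q k : ℕ} (hp : p.Prime)
    (hq : q.Prime) (hqp : q ≠ p) (hk : k ≠ 0) :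
    (q - 1) * (p ^ k)!.factorization q + 2 ≤ p ^ k := by
  have hpk : 2 ≤ p ^ k := hp.two_le.trans (le_self_pow hk p)
  have hdvd : ¬q ∣ p ^ k := fun h => hqp ((prime_dvd_prime_iff_eq hq hp).1 (hq.dvd_of_dvd_pow h))
  have := two_le_digits_sum_of_not_dvd hq.one_lt hpk hdvd
  have := digit_sum_le q (p ^ k)
  rw [sub_one_mul_factorization_factorial hq]
  omega

theorem Nat.Prime.not_dvd_div_of_factorization_eq {p m n : ℕ} (hp : p.Prime) (hn : n ≠ 0)
    (hmn : m ∣ n) (h : m.factorization p = n.factorization p) : ¬p ∣ n / m := by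
  have hdiv : n / m ≠ 0 := (div_ne_zero_iff_of_dvd hmn).2 ⟨hn, ne_zero_of_dvd_ne_zero hn hmn⟩
  have hzero : (n / m).factorization p = 0 := by
    rw [factorization_div hmn, Finsupp.tsub_apply, h, tsub_self]
  simpa [hp, hdiv] using (factorization_eq_zero_iff _ _).1 hzero

theorem Nat.mul_sub_one_div_add_one {e v : ℕ} (he : 0 < e) (hv : 0 < v) :
    (e * v - 1) / e + 1 = v := by
  obtain ⟨w, rfl⟩ : ∃ w, v = w + 1 := ⟨v - 1, by omega⟩
  rw [mul_add_one, show e * w + e - 1 = e - 1 + e * w by omega, Nat.add_mul_div_left _ _ he,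
    Nat.div_eq_of_lt (by omega), zero_add]

theorem toddNumber_ne_zero (n : ℕ) : toddNumber n ≠ 0 :=
  Finset.prod_ne_zero_iff.2 fun _ hq => pow_ne_zero _ (Finset.mem_filter.1 hq).2.ne_zero

theorem factorization_toddNumber (n : ℕ) {q : ℕ} (hq : q.Prime) :
    (toddNumber n).factorization q = n / (q - 1) := by
  rw [toddNumber,
    factorization_prod_apply fun r hr => pow_ne_zero _ (Finset.mem_filter.1 hr).2.ne_zero,
    Finset.sum_congr rfl fun r hr => by
    rw [(Finset.mem_filter.1 hr).2.factorization_pow, Finsupp.single_apply], Finset.sum_ite_eq']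
  split_ifs with hmem
  · rfl
  · have : n + 2 ≤ q := by simpa [hq] using hmem
    exact (Nat.div_eq_of_lt (by omega)).symm

theorem prod_factorial_succ_ne_zero (α : List ℕ) : (α.map fun a => (a + 1)!).prod ≠ 0 :=
  List.prod_ne_zero (by simp [factorial_ne_zero])

theorem sub_one_mul_factorization_prod_factorial_succ (q : ℕ) (α : List ℕ) :
    (q - 1) * (α.map fun a => (a + 1)!).prod.factorization q =
      (α.map fun a => (q - 1) * (a + 1)!.factorization q).sum := by
  rw [factorization_list_prod (by simp [factorial_ne_zero]), ← List.sum_map_mul_left, List.map_map]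
  rfl

theorem sub_one_mul_factorization_prod_factorial_succ_self {p : ℕ} {α : List ℕ} (hp : p.Prime)
    (hα : ∀ a ∈ α, ∃ k, 1 ≤ k ∧ a = p ^ k - 1) :
    (p - 1) * (α.map fun a => (a + 1)!).prod.factorization p = α.sum := by
  rw [sub_one_mul_factorization_prod_factorial_succ]
  congr 1
  refine (List.map_congr_left fun a ha => ?_).trans (List.map_id α)
  obtain ⟨k, -, rfl⟩ := hα a ha
  rw [Nat.sub_add_cancel (one_le_pow _ _ hp.pos), hp.sub_one_mul_factorization_factorial_pow]
  rfl

theorem sub_one_mul_factorization_prod_factorial_succ_add_length_le {p q : ℕ} {α : List ℕ}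
    (hp : p.Prime) (hq : q.Prime) (hqp : q ≠ p) (hα : ∀ a ∈ α, ∃ k, 1 ≤ k ∧ a = p ^ k - 1) :
    (q - 1) * (α.map fun a => (a + 1)!).prod.factorization q + α.length ≤ α.sum := by
  rw [sub_one_mul_factorization_prod_factorial_succ]
  induction α with
  | nil => simp
  | cons a α ih =>
    rw [List.forall_mem_cons] at hα
    obtain ⟨⟨k, hk, rfl⟩, hα⟩ := hα
    have hhead := hp.sub_one_mul_factorization_factorial_pow_add_two_le hq hqp (k := k) (by omega)
    have htail := ih hα
    simp only [List.map_cons, List.sum_cons, List.length_cons]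
    rw [Nat.sub_add_cancel (one_le_pow _ _ hp.pos)]
    omega

theorem p_mul_todd_div_partition_factorial_general (p d : ℕ) (hp : p.Prime) (hd : 0 < d)
    (α : List ℕ) (hsum : α.sum = d)
    (hΛ : ∀ a ∈ α, ∃ k : ℕ, 1 ≤ k ∧ a = p ^ k - 1) :
    ((α.map fun a => Nat.factorial (a + 1)).prod ∣ p * toddNumber (d - 1)) ∧
      ¬ p ∣ (p * toddNumber (d - 1)) / (α.map fun a => Nat.factorial (a + 1)).prod := by
  set N := (α.map fun a => (a + 1)!).prod
  set M := p * toddNumber (d - 1)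
  have hN : N ≠ 0 := prod_factorial_succ_ne_zero α
  have hM : M ≠ 0 := mul_ne_zero hp.ne_zero (toddNumber_ne_zero _)
  have hMq (q : ℕ) (hq : q.Prime) : M.factorization q = p.factorization q + (d - 1) / (q - 1) := by
    rw [Nat.factorization_mul hp.ne_zero (toddNumber_ne_zero _), Finsupp.add_apply,
      factorization_toddNumber _ hq]
  have hpN : (p - 1) * N.factorization p = d :=
    hsum ▸ sub_one_mul_factorization_prod_factorial_succ_self hp hΛ
  have hNp : N.factorization p = M.factorization p := by
    rw [hMq p hp, hp.factorization_self, ← hpN, add_comm,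
      mul_sub_one_div_add_one (by have := hp.two_le; omega) (Nat.pos_of_mul_pos_left (hpN ▸ hd))]
  have hNq (q : ℕ) (hq : q.Prime) (hqp : q ≠ p) : N.factorization q ≤ M.factorization q := by
    have hle : (q - 1) * N.factorization q + α.length ≤ d :=
      hsum ▸ sub_one_mul_factorization_prod_factorial_succ_add_length_le hp hq hqp hΛ
    have hlen : α.length ≠ 0 := fun h => by simp [List.length_eq_zero_iff.1 h] at hsum; omega
    rw [hMq q hq]
    refine le_add_left ((le_div_iff_mul_le (by have := hq.two_le; omega)).2 ?_)
    rw [mul_comm]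
    omega
  have hdvd : N ∣ M := (factorization_prime_le_iff_dvd hN hM).1 fun q hq => by
    rcases eq_or_ne q p with rfl | hqp
    · exact hNp.le
    · exact hNq q hq hqp
  exact ⟨hdvd, hp.not_dvd_div_of_factorization_eq hM hdvd hNp⟩

/-- If every part of a partition `α` of `d > 0` has the form `p^k - 1` with `k ≥ 1`,
then `p · τ_{d-1} / ∏_i (α_i + 1)!` is an integer not divisible by `p`. -/
theorem p_mul_todd_div_partition_factorial (p d : ℕ) (hp : p.Prime) (hd : 0 < d)
    (α : List ℕ) (hpos : ∀ a ∈ α, 0 < a) (hsum : α.sum = d)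
    (hΛ : ∀ a ∈ α, ∃ k : ℕ, 1 ≤ k ∧ a = p ^ k - 1) :
    ((α.map fun a => Nat.factorial (a + 1)).prod ∣ p * toddNumber (d - 1)) ∧
      ¬ p ∣ (p * toddNumber (d - 1)) / (α.map fun a => Nat.factorial (a + 1)).prod :=
  p_mul_todd_div_partition_factorial_general p d hp hd α hsum hΛ
end
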